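/- Let Δ be a (d−1)-dimensional simplicial complex on [n] and let 0 ≤ k ≤ d−1. Then Δ is k-decomposable if and only if its Stanley–Reisner ideal I_Δ is k-clean. -/

import Mathlib

open MvPolynomial

/-- A monomial ideal: an ideal generated by monomials. -/
def IsMonomialIdeal {K : Type*} [Field K] {σ : Type*}
    (I : Ideal (MvPolynomial σ K)) : Prop :=
  ∃ G : Set (σ →₀ ℕ), I = Ideal.span ((fun a : σ →₀ ℕ => (monomial a (1 : K))) '' G)

/-- `u = x^a` is a cleaner monomial of `I`: `u` is a non-unit monomial not in `I`
with `min(I + Su) ⊆ min(I)`. -/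
def IsCleaner {K : Type*} [Field K] {σ : Type*}
    (I : Ideal (MvPolynomial σ K)) (a : σ →₀ ℕ) : Prop :=
  a ≠ 0 ∧ (monomial a (1 : K)) ∉ I ∧
    (I + Ideal.span {(monomial a (1 : K))}).minimalPrimes ⊆ I.minimalPrimes

/-- `I` has no embedded prime ideals: every associated prime of `S/I` is a minimal prime of `I`. -/
def NoEmbeddedPrimes {K : Type*} [Field K] {σ : Type*}
    (I : Ideal (MvPolynomial σ K)) : Prop :=
  ∀ P ∈ associatedPrimes (MvPolynomial σ K) (MvPolynomial σ K ⧸ I), P ∈ I.minimalPrimes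

/-- `I` is `k`-clean: `I` is prime, or `I` has no embedded primes and there is a cleaner
monomial `u ∉ I` with `|supp u| ≤ k+1` such that `I : u` and `I + Su` are `k`-clean. -/
inductive KClean (K : Type*) [Field K] (σ : Type*) (k : ℕ) :
    Ideal (MvPolynomial σ K) → Prop
  | prime (I : Ideal (MvPolynomial σ K)) (h : I.IsPrime) : KClean K σ k I
  | step (I : Ideal (MvPolynomial σ K)) (a : σ →₀ ℕ)
      (hne : NoEmbeddedPrimes I) (hcl : IsCleaner I a)
      (hsupp : a.support.card ≤ k + 1)
      (hcolon : KClean K σ k (Submodule.colon I (Ideal.span {(monomial a (1 : K))})))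
      (hsum : KClean K σ k (I + Ideal.span {(monomial a (1 : K))})) : KClean K σ k I

/-- A submodule of `S/I` is multigraded iff it is generated by images of monomials. -/
def IsMultigradedSubmodule {K : Type*} [Field K] {σ : Type*}
    (I : Ideal (MvPolynomial σ K)) (N : Submodule (MvPolynomial σ K) (MvPolynomial σ K ⧸ I)) :
    Prop :=
  ∃ A : Set (σ →₀ ℕ),
    N = Submodule.span (MvPolynomial σ K)
      ((fun a : σ →₀ ℕ => Ideal.Quotient.mk I (monomial a (1 : K))) '' A)

/-- `I` is clean: `S/I` admits a multigraded prime filtration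
`0 = M₀ ⊂ M₁ ⊂ ⋯ ⊂ M_r = S/I` whose factors `M_i/M_{i-1}` are isomorphic to `S/P_i`
(with a multidegree shift) for minimal primes `P_i` of `I`. -/
def IsClean {K : Type*} [Field K] {σ : Type*} (I : Ideal (MvPolynomial σ K)) : Prop :=
  ∃ (r : ℕ) (M : Fin (r + 1) → Submodule (MvPolynomial σ K) (MvPolynomial σ K ⧸ I)),
    M 0 = ⊥ ∧ M (Fin.last r) = ⊤ ∧ StrictMono M ∧
    (∀ i, IsMultigradedSubmodule I (M i)) ∧
    (∀ i : Fin r, ∃ P ∈ I.minimalPrimes,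
      Nonempty ((↥(M i.succ) ⧸ (Submodule.comap (M i.succ).subtype (M i.castSucc)))
        ≃ₗ[MvPolynomial σ K] (MvPolynomial σ K ⧸ P)))

/-- `D` is a simplicial complex on `Fin n` (a collection of finite sets closed
under taking subsets). -/
def IsSimplicialComplex {n : ℕ} (D : Finset (Finset (Fin n))) : Prop :=
  ∀ F ∈ D, ∀ G, G ⊆ F → G ∈ D

/-- The Stanley–Reisner ideal of `D`, generated by the squarefree monomials
`x^F = ∏_{i ∈ F} x_i` over the non-faces `F` of `D`. -/
noncomputable def srIdeal (K : Type*) [Field K] {n : ℕ} (D : Finset (Finset (Fin n))) :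
    Ideal (MvPolynomial (Fin n) K) :=
  Ideal.span ((fun F : Finset (Fin n) => ∏ i ∈ F, (X i : MvPolynomial (Fin n) K)) ''
    {F : Finset (Fin n) | F ∉ D})

/-- `F` is a facet (maximal face) of the collection `E`. -/
def IsFacetOf {n : ℕ} (E : Finset (Finset (Fin n))) (F : Finset (Fin n)) : Prop :=
  F ∈ E ∧ ∀ G ∈ E, F ⊆ G → F = G

/-- The star of a face: `star_D σ = {F ∈ D : σ ∪ F ∈ D}`. -/
def starC {n : ℕ} (D : Finset (Finset (Fin n))) (s : Finset (Fin n)) :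
    Finset (Finset (Fin n)) :=
  D.filter fun F => s ∪ F ∈ D

/-- The deletion of a face: `D ∖ σ = {F ∈ D : σ ⊄ F}`. -/
def delC {n : ℕ} (D : Finset (Finset (Fin n))) (s : Finset (Fin n)) :
    Finset (Finset (Fin n)) :=
  D.filter fun F => ¬ s ⊆ F

/-- The link of a face: `link_D σ = {F ∈ D : σ ∩ F = ∅, σ ∪ F ∈ D}`. -/
def linkC {n : ℕ} (D : Finset (Finset (Fin n))) (s : Finset (Fin n)) :
    Finset (Finset (Fin n)) :=
  D.filter fun F => s ∩ F = ∅ ∧ s ∪ F ∈ D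

/-- `σ` is a shedding face of `D`: `σ` is a face and no facet of `(star_D σ) ∖ σ`
is a facet of `D ∖ σ`. -/
def IsSheddingFace {n : ℕ} (D : Finset (Finset (Fin n))) (s : Finset (Fin n)) : Prop :=
  s ∈ D ∧ ∀ F : Finset (Fin n), IsFacetOf (delC (starC D s) s) F → ¬ IsFacetOf (delC D s) F
/-- `D` is `k`-decomposable: `D` is one of the trivial complexes `{}`, or a simplex
(the powerset of a finite set), or `D` has a shedding face `σ` with `dim σ ≤ k`
(i.e. `|σ| ≤ k + 1`) such that both `link_D σ` and `D ∖ σ` are `k`-decomposable. -/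
inductive KDecomposable {n : ℕ} (k : ℕ) : Finset (Finset (Fin n)) → Prop
  | empty : KDecomposable k (∅ : Finset (Finset (Fin n)))
  | simplex (F : Finset (Fin n)) : KDecomposable k F.powerset
  | shed (D : Finset (Finset (Fin n))) (s : Finset (Fin n))
      (hshed : IsSheddingFace D s) (hcard : s.card ≤ k + 1)
      (hlink : KDecomposable k (linkC D s)) (hdel : KDecomposable k (delC D s)) :
      KDecomposable k D

/-!
Both directions rest on a dictionary between operations on `Δ` and on `I_Δ`: for a face `σ`,
`I_Δ : x^σ = I_{star σ}` and `I_Δ + (x^σ) = I_{Δ ∖ σ}`, while the minimal primes of `I_Δ` are the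
ideals `(x_i : i ∉ F)` for the facets `F`. Hence `x^σ` is a cleaner monomial exactly when every
facet of `Δ ∖ σ` is a facet of `Δ`, which is what a shedding face provides.

Since `star σ` is the cone over `link σ`, induction on the `k`-decomposability of `link_Δ s`
shows that `I_{star s}` is `k`-clean. Conversely, a cleaner monomial `u` need not be squarefree,
so the induction on `k`-cleanness follows a monomial ideal `I` only through `√I = I_Δ`. The
radical of `I : u` is then squeezed between `I_Δ` and `I_{star (supp u)}`, which suffices to
determine `link_Δ (s ∪ supp u)`; so the induction proves that every link `link_Δ s` is
`k`-decomposable, shedding the face `supp u ∖ s`. Both statements give the theorem at `s = ∅`.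
-/

open Finset

theorem Ideal.IsRadical.associatedPrimes_subset_minimalPrimes {R : Type*} [CommRing R]
    {I : Ideal R} (hI : I.IsRadical) : associatedPrimes R (R ⧸ I) ⊆ I.minimalPrimes := by
  rintro P ⟨hP, x, hPx⟩
  obtain ⟨y, rfl⟩ := Ideal.Quotient.mk_surjective x
  have hmem : ∀ r, r ∈ P ↔ r * y ∈ I := fun r => by
    simp only [hPx, Ideal.mem_radical_iff, Submodule.mem_colon_singleton, Submodule.mem_bot,
      Algebra.smul_def, Ideal.Quotient.algebraMap_eq, ← map_mul, Ideal.Quotient.eq_zero_iff_mem]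
    refine ⟨fun ⟨m, hm⟩ => hI ⟨m + 1, ?_⟩, fun h => ⟨1, by rwa [pow_one]⟩⟩
    rw [show (r * y) ^ (m + 1) = r ^ m * y * (r * y ^ m) by ring]
    exact I.mul_mem_right _ hm
  refine ⟨⟨hP, fun r hr => (hmem r).2 (I.mul_mem_right y hr)⟩, fun Q ⟨hQ, hIQ⟩ hQP r hr => ?_⟩
  -- `y ∈ Q ≤ P` would give `y ^ 2 ∈ I`, so `y ∈ I` and `P = ⊤`.
  have hy : y ∉ Q := fun hyQ => hP.ne_top <| (Ideal.eq_top_iff_one P).2 <|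
    (hmem 1).2 <| by simpa using hI ⟨2, by simpa [sq] using (hmem y).1 (hQP hyQ)⟩
  exact (hQ.mem_or_mem (hIQ ((hmem r).1 hr))).resolve_right hy

namespace MvPolynomial

variable {σ R : Type*} [CommRing R]

theorem support_mul_monomial_one (p : MvPolynomial σ R) (a : σ →₀ ℕ) :
    (p * monomial a 1).support = p.support.map (addRightEmbedding a) :=
  AddMonoidAlgebra.support_coeff_mul_single p _ (by simp) _

theorem monomial_one_mem_iff_of_isPrime {P : Ideal (MvPolynomial σ R)} (hP : P.IsPrime)
    (a : σ →₀ ℕ) : monomial a 1 ∈ P ↔ ∏ i ∈ a.support, X i ∈ P := by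
  rw [← prod_X_pow_eq_monomial, Ideal.IsPrime.prod_mem_iff, Ideal.IsPrime.prod_mem_iff]
  exact exists_congr fun i => and_congr_right fun hi =>
    hP.pow_mem_iff_mem _ (Nat.pos_of_ne_zero (Finsupp.mem_support_iff.mp hi))

theorem radical_span_monomial_one (a : σ →₀ ℕ) :
    (Ideal.span {monomial a (1 : R)}).radical = (Ideal.span {∏ i ∈ a.support, X i}).radical := by
  simp only [Ideal.radical_eq_sInf, Ideal.span_singleton_le_iff_mem]
  congr 1
  ext P
  exact ⟨fun ⟨h, hP⟩ => ⟨(monomial_one_mem_iff_of_isPrime hP a).1 h, hP⟩,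
    fun ⟨h, hP⟩ => ⟨(monomial_one_mem_iff_of_isPrime hP a).2 h, hP⟩⟩

theorem prod_X_support_mem_radical {I : Ideal (MvPolynomial σ R)} {a : σ →₀ ℕ}
    (h : monomial a 1 ∈ I) : ∏ i ∈ a.support, X i ∈ I.radical := by
  have : (Ideal.span {monomial a (1 : R)}).radical ≤ I.radical :=
    Ideal.radical_mono ((Ideal.span_singleton_le_iff_mem _).2 h)
  rw [radical_span_monomial_one] at this
  exact this (Ideal.le_radical (Ideal.mem_span_singleton_self _))

noncomputable def squarefreeExp (F : Finset σ) : σ →₀ ℕ := ∑ i ∈ F, Finsupp.single i 1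

theorem squarefreeExp_apply [DecidableEq σ] (F : Finset σ) (i : σ) :
    squarefreeExp F i = if i ∈ F then 1 else 0 := by
  simp [squarefreeExp, Finsupp.finsetSum_apply, Finsupp.single_apply]

@[simp]
theorem support_squarefreeExp (F : Finset σ) : (squarefreeExp F).support = F := by
  classical
  ext i
  simp [Finsupp.mem_support_iff, squarefreeExp_apply]

theorem squarefreeExp_le_iff {F : Finset σ} {a : σ →₀ ℕ} :
    squarefreeExp F ≤ a ↔ F ⊆ a.support := by
  classical
  simp only [Finsupp.le_def, squarefreeExp_apply, Finset.subset_iff, Finsupp.mem_support_iff]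
  refine ⟨fun h i hi => ?_, fun h i => ?_⟩
  · simpa [hi, Nat.one_le_iff_ne_zero] using h i
  · split_ifs with hi
    · exact Nat.one_le_iff_ne_zero.2 (h hi)
    · exact Nat.zero_le _

theorem monomial_squarefreeExp (F : Finset σ) :
    monomial (squarefreeExp F) (1 : R) = ∏ i ∈ F, X i :=
  monomial_sum_one F _

noncomputable def varIdeal (R : Type*) [CommRing R] (A : Set σ) : Ideal (MvPolynomial σ R) :=
  Ideal.span (X '' A)

theorem mem_varIdeal_iff {A : Set σ} {p : MvPolynomial σ R} :
    p ∈ varIdeal R A ↔ ∀ m ∈ p.support, ∃ i ∈ A, m i ≠ 0 :=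
  mem_ideal_span_X_image

theorem X_mem_varIdeal_iff [Nontrivial R] {A : Set σ} {i : σ} : X i ∈ varIdeal R A ↔ i ∈ A := by
  classical
  simp [mem_varIdeal_iff, support_X, Finsupp.single_apply]

theorem varIdeal_le_varIdeal_iff [Nontrivial R] {A B : Set σ} :
    varIdeal R A ≤ varIdeal R B ↔ A ⊆ B :=
  ⟨fun h _ hi => X_mem_varIdeal_iff.1 (h (X_mem_varIdeal_iff.2 hi)),
    fun h => Ideal.span_mono (Set.image_mono h)⟩

theorem varIdeal_inj [Nontrivial R] {A B : Set σ} : varIdeal R A = varIdeal R B ↔ A = B := by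
  simp only [le_antisymm_iff, varIdeal_le_varIdeal_iff]

theorem isPrime_varIdeal [IsDomain R] (A : Set σ) : (varIdeal R A).IsPrime := by
  classical
  -- `varIdeal R A` is the kernel of the substitution killing the variables indexed by `A`.
  set φ : MvPolynomial σ R →ₐ[R] MvPolynomial σ R := aeval fun i => if i ∈ A then 0 else X i
  have hφ : ∀ p, p - φ p ∈ varIdeal R A := by
    intro p
    induction p using MvPolynomial.induction_on with
    | C c => simp
    | add p q hp hq => simpa [add_sub_add_comm] using add_mem hp hq
    | mul_X p i hp =>
      have hXi : X i - φ (X i) ∈ varIdeal R A := by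
        by_cases hi : i ∈ A
        · simpa [φ, hi] using X_mem_varIdeal_iff.2 hi
        · simp [φ, hi]
      have : p * X i - φ (p * X i) = (p - φ p) * X i + φ p * (X i - φ (X i)) := by
        rw [map_mul]; ring
      rw [this]
      exact add_mem (Ideal.mul_mem_right _ _ hp) (Ideal.mul_mem_left _ _ hXi)
  have hker : varIdeal R A = RingHom.ker φ := by
    refine le_antisymm (Ideal.span_le.2 ?_) fun p hp => ?_
    · rintro _ ⟨i, hi, rfl⟩
      simp [φ, hi]
    · simpa [(RingHom.mem_ker).1 hp] using hφ p
  rw [hker]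
  exact RingHom.ker_isPrime _

end MvPolynomial

section MonomialIdeal

variable {K σ : Type*} [Field K] {I : Ideal (MvPolynomial σ K)}

theorem isMonomialIdeal_iff_monomial_mem :
    IsMonomialIdeal I ↔ ∀ p ∈ I, ∀ m ∈ p.support, monomial m (1 : K) ∈ I := by
  classical
  refine ⟨?_, fun h => ⟨{m | monomial m 1 ∈ I}, le_antisymm (fun p hp => ?_) ?_⟩⟩
  · rintro ⟨G, rfl⟩ p hp m hm
    rw [mem_ideal_span_monomial_image] at hp ⊢
    simpa [support_monomial] using hp m hm
  · exact mem_ideal_span_monomial_image.2 fun m hm => ⟨m, h p hp m hm, le_rfl⟩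
  · exact Ideal.span_le.2 (Set.image_subset_iff.2 fun m hm => hm)

theorem IsMonomialIdeal.add_span_monomial (hI : IsMonomialIdeal I) (a : σ →₀ ℕ) :
    IsMonomialIdeal (I + Ideal.span {monomial a (1 : K)}) := by
  obtain ⟨G, rfl⟩ := hI
  exact ⟨G ∪ {a}, by rw [Set.image_union, Ideal.span_union, Submodule.add_eq_sup,
    Set.image_singleton]⟩

theorem IsMonomialIdeal.colon_span_monomial (hI : IsMonomialIdeal I) (a : σ →₀ ℕ) :
    IsMonomialIdeal (Submodule.colon I (Ideal.span {monomial a (1 : K)})) := by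
  rw [isMonomialIdeal_iff_monomial_mem] at hI ⊢
  intro p hp m hm
  rw [Ideal.mem_colon_span_singleton] at hp ⊢
  have hma : m + a ∈ (p * monomial a 1).support := by
    rw [support_mul_monomial_one]
    exact Finset.mem_map_of_mem _ hm
  simpa [monomial_mul] using hI _ hp _ hma

end MonomialIdeal

section Complex

variable {n : ℕ} {D E : Finset (Finset (Fin n))} {s t u F G : Finset (Fin n)}

theorem isFacetOf_iff_maximal : IsFacetOf D F ↔ Maximal (· ∈ D) F :=
  and_congr_right fun _ => forall₂_congr fun _ _ =>
    ⟨fun h hFG => (h hFG).ge, fun h hFG => le_antisymm hFG (h hFG)⟩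

theorem exists_isFacetOf_superset (hF : F ∈ D) : ∃ G, IsFacetOf D G ∧ F ⊆ G := by
  obtain ⟨G, hFG, hG⟩ := D.exists_le_maximal hF
  exact ⟨G, isFacetOf_iff_maximal.2 hG, hFG⟩

theorem mem_starC : F ∈ starC D s ↔ F ∈ D ∧ s ∪ F ∈ D := mem_filter

theorem mem_delC : F ∈ delC D s ↔ F ∈ D ∧ ¬s ⊆ F := mem_filter

theorem mem_linkC : F ∈ linkC D s ↔ F ∈ D ∧ Disjoint s F ∧ s ∪ F ∈ D := by
  simp [linkC, disjoint_iff_inter_eq_empty]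

theorem isSimplicialComplex_powerset (G : Finset (Fin n)) : IsSimplicialComplex G.powerset :=
  fun _ hF _ hHF => mem_powerset.2 (hHF.trans (mem_powerset.1 hF))

theorem isSimplicialComplex_starC (hD : IsSimplicialComplex D) (s : Finset (Fin n)) :
    IsSimplicialComplex (starC D s) := fun F hF G hG => by
  rw [mem_starC] at hF ⊢
  exact ⟨hD F hF.1 G hG, hD _ hF.2 _ (union_subset_union_right hG)⟩

theorem isSimplicialComplex_delC (hD : IsSimplicialComplex D) (t : Finset (Fin n)) :
    IsSimplicialComplex (delC D t) := fun F hF G hG => by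
  rw [mem_delC] at hF ⊢
  exact ⟨hD F hF.1 G hG, fun htG => hF.2 (htG.trans hG)⟩

theorem isSimplicialComplex_linkC (hD : IsSimplicialComplex D) (s : Finset (Fin n)) :
    IsSimplicialComplex (linkC D s) := fun F hF G hG => by
  rw [mem_linkC] at hF ⊢
  exact ⟨hD F hF.1 G hG, hF.2.1.mono_right hG, hD _ hF.2.2 _ (union_subset_union_right hG)⟩

@[simp]
theorem starC_empty (D : Finset (Finset (Fin n))) : starC D ∅ = D := by
  ext; simp [mem_starC]

@[simp]
theorem linkC_empty (D : Finset (Finset (Fin n))) : linkC D ∅ = D := by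
  ext; simp [mem_linkC]

theorem delC_starC_sdiff : delC (starC D s) (t \ s) = starC (delC D t) s := by
  ext F
  simp only [mem_delC, mem_starC, sdiff_le_iff]
  grind

theorem delC_linkC_sdiff : delC (linkC D s) (t \ s) = linkC (delC D t) s := by
  ext F
  simp only [mem_delC, mem_linkC, sdiff_le_iff]
  grind

theorem isFacetOf_starC_iff : IsFacetOf (starC D s) G ↔ IsFacetOf D G ∧ s ⊆ G := by
  simp only [IsFacetOf, mem_starC]
  constructor
  · rintro ⟨⟨hG, hsG⟩, hmax⟩
    have hsG' : s ⊆ G := by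
      rw [hmax _ ⟨hsG, by rwa [← union_assoc, union_self]⟩ subset_union_right]
      exact subset_union_left
    exact ⟨⟨hG, fun H hH hGH => hmax H ⟨hH, by rwa [union_eq_right.2 (hsG'.trans hGH)]⟩ hGH⟩,
      hsG'⟩
  · rintro ⟨⟨hG, hmax⟩, hsG⟩
    exact ⟨⟨hG, by rwa [union_eq_right.2 hsG]⟩, fun H hH => hmax H hH.1⟩

theorem linkC_powerset (G s : Finset (Fin n)) :
    linkC G.powerset s = if s ⊆ G then (G \ s).powerset else ∅ := by
  ext F
  simp only [mem_linkC, mem_powerset]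
  split_ifs with hs
  · simp only [mem_powerset, subset_sdiff, union_subset_iff, disjoint_comm (a := F)]
    tauto
  · simp only [notMem_empty, iff_false, union_subset_iff]
    tauto

namespace IsSimplicialComplex

theorem mem_starC_iff (hD : IsSimplicialComplex D) : F ∈ starC D s ↔ s ∪ F ∈ D :=
  mem_starC.trans (and_iff_right_of_imp fun h => hD _ h _ subset_union_right)

theorem empty_mem_linkC (hD : IsSimplicialComplex D) (hs : s ∈ D) : ∅ ∈ linkC D s :=
  mem_linkC.2 ⟨hD s hs ∅ (empty_subset s), disjoint_empty_right s, by rwa [union_empty]⟩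

theorem starC_starC (hD : IsSimplicialComplex D) :
    starC (starC D s) t = starC D (s ∪ t) := by
  ext F
  rw [mem_starC_iff (isSimplicialComplex_starC hD s), mem_starC_iff hD, mem_starC_iff hD,
    union_assoc]

theorem linkC_linkC_sdiff (hD : IsSimplicialComplex D) :
    linkC (linkC D s) (t \ s) = linkC D (s ∪ t) := by
  ext F
  simp only [mem_linkC]
  have hunion : s ∪ (t \ s ∪ F) = s ∪ t ∪ F := by
    rw [← union_assoc, union_sdiff_self_eq_union]
  rw [hunion]
  constructor
  · rintro ⟨⟨hF, hsF, -⟩, htF, -, -, hstF⟩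
    refine ⟨hF, ?_, hstF⟩
    grind [disjoint_left]
  · rintro ⟨hF, hstF, hD'⟩
    refine ⟨⟨hF, ?_, hD _ hD' _ ?_⟩, ?_, hD _ hD' _ ?_, ?_, hD'⟩
    all_goals grind [disjoint_left]

theorem starC_eq_powerset (hD : IsSimplicialComplex D) (h : linkC D s = G.powerset) :
    starC D s = (s ∪ G).powerset := by
  ext F
  have hlink : F \ s ∈ linkC D s ↔ s ∪ F ∈ D := by
    rw [mem_linkC, union_sdiff_self_eq_union]
    exact ⟨fun h => h.2.2, fun h' => ⟨hD _ h' _ (sdiff_subset.trans subset_union_right),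
      disjoint_sdiff, h'⟩⟩
  rw [mem_starC_iff hD, ← hlink, h, mem_powerset, mem_powerset, sdiff_le_iff]
  rfl

theorem delC_eq_self (hD : IsSimplicialComplex D) (ht : t ∉ D) : delC D t = D :=
  filter_true_of_mem fun F hF htF => ht (hD F hF t htF)

theorem linkC_eq_of_starC_subset (hD : IsSimplicialComplex D) (hED : E ⊆ D)
    (hE : starC D t ⊆ E) (htu : t ⊆ u) : linkC E u = linkC D u := by
  ext F
  simp only [mem_linkC]
  refine ⟨fun ⟨hF, hu, huF⟩ => ⟨hED hF, hu, hED huF⟩, fun ⟨hF, hu, huF⟩ => ⟨hE ?_, hu, hE ?_⟩⟩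
  · exact mem_starC.2 ⟨hF, hD _ huF _ (union_subset_union_left htu)⟩
  · exact mem_starC.2 ⟨huF, by rwa [← union_assoc, union_eq_right.2 htu]⟩

theorem isFacetOf_linkC_iff (hD : IsSimplicialComplex D) :
    IsFacetOf (linkC D s) F ↔ Disjoint s F ∧ IsFacetOf D (s ∪ F) := by
  simp only [IsFacetOf, mem_linkC]
  constructor
  · rintro ⟨⟨-, hsF, hsFD⟩, hmax⟩
    refine ⟨hsF, hsFD, fun H hH hsub => ?_⟩
    have hsH : s ⊆ H := subset_union_left.trans hsub
    have hHs := hmax (H \ s) ⟨hD H hH _ sdiff_subset, disjoint_sdiff,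
      by rwa [union_sdiff_of_subset hsH]⟩
      (subset_sdiff.2 ⟨subset_union_right.trans hsub, hsF.symm⟩)
    rw [hHs, union_sdiff_of_subset hsH]
  · rintro ⟨hsF, hsFD, hmax⟩
    refine ⟨⟨hD _ hsFD _ subset_union_right, hsF, hsFD⟩, ?_⟩
    rintro G ⟨-, hsG, hsGD⟩ hFG
    rw [← union_sdiff_cancel_left hsF, hmax _ hsGD (union_subset_union_right hFG),
      union_sdiff_cancel_left hsG]

end IsSimplicialComplex

theorem IsFacetOf.of_subset (hF : IsFacetOf D F) (hED : E ⊆ D) (hFE : F ∈ E) : IsFacetOf E F :=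
  ⟨hFE, fun G hG => hF.2 G (hED hG)⟩

theorem IsSheddingFace.isFacetOf_of_isFacetOf_delC (hD : IsSimplicialComplex D)
    (ht : IsSheddingFace D t) (hF : IsFacetOf (delC D t) F) : IsFacetOf D F := by
  obtain ⟨hFD, htF⟩ := mem_delC.1 hF.1
  by_contra hnot
  obtain ⟨G, hG, hFG, hne⟩ : ∃ G ∈ D, F ⊆ G ∧ F ≠ G := by
    simpa [IsFacetOf, hFD] using hnot
  have htG : t ⊆ G := by
    by_contra htG
    exact hne (hF.2 G (mem_delC.2 ⟨hG, htG⟩) hFG)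
  have hFstar : F ∈ delC (starC D t) t :=
    mem_delC.2 ⟨mem_starC.2 ⟨hFD, hD _ hG _ (union_subset htG hFG)⟩, htF⟩
  refine ht.2 F (hF.of_subset (fun H hH => ?_) hFstar) hF
  obtain ⟨hH, htH⟩ := mem_delC.1 hH
  exact mem_delC.2 ⟨(mem_starC.1 hH).1, htH⟩

theorem IsSimplicialComplex.isSheddingFace_linkC_sdiff (hD : IsSimplicialComplex D)
    (hst : s ∪ t ∈ D) (hfac : ∀ G, IsFacetOf (delC D t) G → IsFacetOf D G) :
    IsSheddingFace (linkC D s) (t \ s) := by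
  refine ⟨mem_linkC.2 ⟨hD _ hst _ (sdiff_subset.trans subset_union_right), disjoint_sdiff,
    by rwa [union_sdiff_self_eq_union]⟩, fun F hF hF' => ?_⟩
  rw [delC_linkC_sdiff, (isSimplicialComplex_delC hD t).isFacetOf_linkC_iff] at hF'
  obtain ⟨hstar, htF⟩ := mem_delC.1 hF.1
  -- `s ∪ F` is a facet of `D ∖ t`, hence of `D`, inside the face `s ∪ (t \ s) ∪ F`.
  have hstF := (mem_linkC.1 (mem_starC.1 hstar).2).2.2
  have heq := (hfac _ hF'.2).2 _ hstF (union_subset_union_right subset_union_right)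
  refine htF (sdiff_le_iff.2 ?_)
  change t ⊆ s ∪ F
  rw [heq]
  grind

theorem IsSimplicialComplex.isFacetOf_starC_of_isFacetOf_delC (hD : IsSimplicialComplex D)
    {b : Finset (Fin n)} (hb : IsSheddingFace (linkC D s) b) (hsb : Disjoint s b)
    (hG : IsFacetOf (delC (starC D s) b) G) : IsFacetOf (starC D s) G := by
  have hbs : b \ s = b := sdiff_eq_self_of_disjoint hsb.symm
  rw [← hbs, delC_starC_sdiff, isFacetOf_starC_iff] at hG
  obtain ⟨hG, hsG⟩ := hG
  have hlink : IsFacetOf (linkC (delC D b) s) (G \ s) :=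
    (isSimplicialComplex_delC hD b).isFacetOf_linkC_iff.2
      ⟨disjoint_sdiff, by rwa [union_sdiff_of_subset hsG]⟩
  rw [← delC_linkC_sdiff, hbs] at hlink
  have := (hD.isFacetOf_linkC_iff.1
    (hb.isFacetOf_of_isFacetOf_delC (isSimplicialComplex_linkC hD s) hlink)).2
  rw [union_sdiff_of_subset hsG] at this
  exact isFacetOf_starC_iff.2 ⟨this, hsG⟩

end Complex

section StanleyReisner

variable {K : Type*} [Field K] {n : ℕ} {D E : Finset (Finset (Fin n))}

theorem srIdeal_eq_span_monomial (D : Finset (Finset (Fin n))) :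
    srIdeal K D = Ideal.span ((fun a => monomial a (1 : K)) '' (squarefreeExp '' {F | F ∉ D})) := by
  simp only [srIdeal, Set.image_image, monomial_squarefreeExp]

theorem isMonomialIdeal_srIdeal (D : Finset (Finset (Fin n))) : IsMonomialIdeal (srIdeal K D) :=
  ⟨_, srIdeal_eq_span_monomial D⟩

namespace IsSimplicialComplex

theorem mem_srIdeal_iff (hD : IsSimplicialComplex D) {p : MvPolynomial (Fin n) K} :
    p ∈ srIdeal K D ↔ ∀ m ∈ p.support, m.support ∉ D := by
  rw [srIdeal_eq_span_monomial, mem_ideal_span_monomial_image]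
  refine forall₂_congr fun m _ =>
    ⟨?_, fun h => ⟨_, ⟨m.support, h, rfl⟩, squarefreeExp_le_iff.2 subset_rfl⟩⟩
  rintro ⟨_, ⟨F, hF, rfl⟩, hFm⟩ hm
  exact hF (hD _ hm _ (squarefreeExp_le_iff.1 hFm))

theorem monomial_mem_srIdeal_iff (hD : IsSimplicialComplex D) {a : Fin n →₀ ℕ} :
    monomial a (1 : K) ∈ srIdeal K D ↔ a.support ∉ D := by
  classical
  simp [hD.mem_srIdeal_iff, support_monomial]

theorem prod_X_mem_srIdeal_iff (hD : IsSimplicialComplex D) {F : Finset (Fin n)} :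
    ∏ i ∈ F, X i ∈ srIdeal K D ↔ F ∉ D := by
  rw [← monomial_squarefreeExp, hD.monomial_mem_srIdeal_iff, support_squarefreeExp]

theorem srIdeal_eq_inf (hD : IsSimplicialComplex D) :
    srIdeal K D = D.inf fun F => varIdeal K (↑F)ᶜ := by
  ext p
  simp only [hD.mem_srIdeal_iff, Submodule.mem_finsetInf, mem_varIdeal_iff, Set.mem_compl_iff,
    mem_coe]
  constructor
  · intro h F hF m hm
    by_contra! hc
    exact h m hm (hD F hF _ fun i hi =>
      by_contra fun hiF => Finsupp.mem_support_iff.1 hi (hc i hiF))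
  · intro h m hm hmD
    obtain ⟨i, hi, hmi⟩ := h _ hmD m hm
    exact hi (Finsupp.mem_support_iff.2 hmi)

theorem isRadical_srIdeal (hD : IsSimplicialComplex D) : (srIdeal K D).IsRadical := by
  rw [hD.srIdeal_eq_inf]
  exact inf_induction le_top (fun _ h₁ _ h₂ => h₁.inf h₂)
    fun F _ => (isPrime_varIdeal _).isRadical

theorem noEmbeddedPrimes_srIdeal (hD : IsSimplicialComplex D) : NoEmbeddedPrimes (srIdeal K D) :=
  hD.isRadical_srIdeal.associatedPrimes_subset_minimalPrimes

theorem mem_minimalPrimes_srIdeal_iff (hD : IsSimplicialComplex D)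
    {P : Ideal (MvPolynomial (Fin n) K)} :
    P ∈ (srIdeal K D).minimalPrimes ↔ ∃ F, IsFacetOf D F ∧ P = varIdeal K (↑F)ᶜ := by
  have hle : ∀ {Q : Ideal (MvPolynomial (Fin n) K)}, Q.IsPrime →
      (srIdeal K D ≤ Q ↔ ∃ F, IsFacetOf D F ∧ varIdeal K (↑F)ᶜ ≤ Q) := fun hQ => by
    rw [hD.srIdeal_eq_inf, hQ.inf_le']
    refine ⟨fun ⟨F, hF, hFQ⟩ => ?_, fun ⟨F, hF, hFQ⟩ => ⟨F, hF.1, hFQ⟩⟩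
    obtain ⟨G, hG, hFG⟩ := exists_isFacetOf_superset hF
    exact ⟨G, hG, le_trans (varIdeal_le_varIdeal_iff.2 (by simpa using hFG)) hFQ⟩
  have hmem : ∀ {F}, IsFacetOf D F → srIdeal K D ≤ varIdeal K (↑F)ᶜ := fun hF =>
    (hle (isPrime_varIdeal _)).2 ⟨_, hF, le_rfl⟩
  constructor
  · rintro ⟨⟨hP, hDP⟩, hmin⟩
    obtain ⟨F, hF, hFP⟩ := (hle hP).1 hDP
    exact ⟨F, hF, le_antisymm (hmin ⟨isPrime_varIdeal _, hmem hF⟩ hFP) hFP⟩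
  · rintro ⟨F, hF, rfl⟩
    refine ⟨⟨isPrime_varIdeal _, hmem hF⟩, fun Q ⟨hQ, hDQ⟩ hQF => ?_⟩
    obtain ⟨G, hG, hGQ⟩ := (hle hQ).1 hDQ
    have hFG : F ⊆ G := by simpa using varIdeal_le_varIdeal_iff.1 (hGQ.trans hQF)
    rwa [hF.2 G hG.1 hFG]

theorem minimalPrimes_srIdeal_subset_iff (hD : IsSimplicialComplex D)
    (hE : IsSimplicialComplex E) :
    (srIdeal K E).minimalPrimes ⊆ (srIdeal K D).minimalPrimes ↔
      ∀ G, IsFacetOf E G → IsFacetOf D G := by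
  refine ⟨fun h G hG => ?_, fun h P hP => ?_⟩
  · obtain ⟨F, hF, hGF⟩ := hD.mem_minimalPrimes_srIdeal_iff.1
      (h (hE.mem_minimalPrimes_srIdeal_iff.2 ⟨G, hG, rfl⟩))
    rwa [show G = F by simpa using varIdeal_inj.1 hGF]
  · obtain ⟨G, hG, rfl⟩ := hE.mem_minimalPrimes_srIdeal_iff.1 hP
    exact hD.mem_minimalPrimes_srIdeal_iff.2 ⟨G, h G hG, rfl⟩

end IsSimplicialComplex

theorem srIdeal_le_srIdeal_iff (hE : IsSimplicialComplex E) :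
    srIdeal K D ≤ srIdeal K E ↔ E ⊆ D := by
  refine ⟨fun h F hF => by_contra fun hFD => ?_, fun h => ?_⟩
  · exact hE.prod_X_mem_srIdeal_iff.1 (h (Ideal.subset_span ⟨F, hFD, rfl⟩)) hF
  · unfold srIdeal
    exact Ideal.span_mono (Set.image_mono fun F hF hFE => hF (h hFE))

theorem srIdeal_powerset (G : Finset (Fin n)) : srIdeal K G.powerset = varIdeal K (↑G)ᶜ := by
  rw [(isSimplicialComplex_powerset G).srIdeal_eq_inf]
  refine le_antisymm (Finset.inf_le (mem_powerset_self G)) (Finset.le_inf fun F hF => ?_)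
  exact varIdeal_le_varIdeal_iff.2 (by simpa using mem_powerset.1 hF)

theorem IsSimplicialComplex.exists_eq_powerset_of_isPrime_srIdeal (hD : IsSimplicialComplex D)
    (hP : (srIdeal K D).IsPrime) : ∃ G : Finset (Fin n), D = G.powerset := by
  classical
  refine ⟨univ.filter fun i => {i} ∈ D, ext fun F => ⟨fun hF => ?_, fun hF => ?_⟩⟩
  · exact mem_powerset.2 fun i hi =>
      mem_filter.2 ⟨mem_univ _, hD F hF _ (singleton_subset_iff.2 hi)⟩
  · by_contra hFD
    obtain ⟨i, hi, hXi⟩ := hP.prod_mem_iff.1 (hD.prod_X_mem_srIdeal_iff.2 hFD)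
    refine (hD.prod_X_mem_srIdeal_iff (F := {i})).1 (by rwa [prod_singleton]) ?_
    exact (mem_filter.1 (mem_powerset.1 hF hi)).2

theorem IsSimplicialComplex.colon_srIdeal (hD : IsSimplicialComplex D) (a : Fin n →₀ ℕ) :
    Submodule.colon (srIdeal K D) (Ideal.span {monomial a (1 : K)}) =
      srIdeal K (starC D a.support) := by
  classical
  ext p
  rw [Ideal.mem_colon_span_singleton, hD.mem_srIdeal_iff,
    (isSimplicialComplex_starC hD _).mem_srIdeal_iff, support_mul_monomial_one, forall_mem_map]
  refine forall₂_congr fun m _ => ?_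
  rw [hD.mem_starC_iff, addRightEmbedding_apply, Finsupp.support_add_eq_union, union_comm]

theorem IsSimplicialComplex.srIdeal_add_span_monomial (hD : IsSimplicialComplex D)
    (t : Finset (Fin n)) :
    srIdeal K D + Ideal.span {monomial (squarefreeExp t) (1 : K)} = srIdeal K (delC D t) := by
  have hdel := isSimplicialComplex_delC hD t
  rw [monomial_squarefreeExp, Submodule.add_eq_sup]
  refine le_antisymm (sup_le ((srIdeal_le_srIdeal_iff hdel).2 (filter_subset _ _)) ?_) ?_
  · rw [Ideal.span_singleton_le_iff_mem, hdel.prod_X_mem_srIdeal_iff, mem_delC]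
    exact fun h => h.2 subset_rfl
  · refine Ideal.span_le.2 ?_
    rintro _ ⟨G, hG, rfl⟩
    by_cases hGD : G ∈ D
    · have htG : t ⊆ G := by_contra fun htG => hG (mem_delC.2 ⟨hGD, htG⟩)
      change ∏ i ∈ G, X i ∈ _
      rw [← prod_sdiff htG]
      exact Ideal.mem_sup_right (Ideal.mul_mem_left _ _ (Ideal.mem_span_singleton_self _))
    · exact Ideal.mem_sup_left (hD.prod_X_mem_srIdeal_iff.2 hGD)

theorem IsMonomialIdeal.exists_srIdeal_eq_radical {J : Ideal (MvPolynomial (Fin n) K)}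
    (hJ : IsMonomialIdeal J) : ∃ E, IsSimplicialComplex E ∧ srIdeal K E = J.radical := by
  classical
  set E := univ.filter fun F : Finset (Fin n) => ∏ i ∈ F, X i ∉ J.radical
  have hmem : ∀ F, F ∈ E ↔ ∏ i ∈ F, X i ∉ J.radical := by simp [E]
  have hE : IsSimplicialComplex E := fun F hF G hGF => (hmem G).2 fun hG =>
    (hmem F).1 hF (by rw [← prod_sdiff hGF]; exact Ideal.mul_mem_left _ _ hG)
  refine ⟨E, hE, le_antisymm (Ideal.span_le.2 ?_) ?_⟩
  · rintro _ ⟨F, hF, rfl⟩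
    simpa [hmem] using hF
  · rw [← hE.isRadical_srIdeal.radical]
    refine Ideal.radical_mono ?_
    obtain ⟨G, hG⟩ := hJ
    rw [hG, Ideal.span_le]
    rintro _ ⟨g, hg, rfl⟩
    rw [SetLike.mem_coe, hE.monomial_mem_srIdeal_iff, hmem, not_not]
    exact prod_X_support_mem_radical (hG ▸ Ideal.subset_span ⟨g, hg, rfl⟩)

theorem IsSimplicialComplex.radical_add_span_monomial (hD : IsSimplicialComplex D)
    {I : Ideal (MvPolynomial (Fin n) K)} (hI : I.radical = srIdeal K D) (a : Fin n →₀ ℕ) :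
    (I + Ideal.span {monomial a 1}).radical = srIdeal K (delC D a.support) := by
  rw [← (isSimplicialComplex_delC hD _).isRadical_srIdeal.radical,
    ← hD.srIdeal_add_span_monomial, Submodule.add_eq_sup, Submodule.add_eq_sup,
    Ideal.radical_sup, Ideal.radical_sup (srIdeal K D), hI, hD.isRadical_srIdeal.radical,
    radical_span_monomial_one, radical_span_monomial_one, support_squarefreeExp]

theorem IsSimplicialComplex.linkC_eq_of_srIdeal_eq_radical_colon (hD : IsSimplicialComplex D)
    {I : Ideal (MvPolynomial (Fin n) K)} (hI : I.radical = srIdeal K D) {a : Fin n →₀ ℕ}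
    (hE : IsSimplicialComplex E)
    (hEI : srIdeal K E = (Submodule.colon I (Ideal.span {monomial a (1 : K)})).radical)
    {u : Finset (Fin n)} (hu : a.support ⊆ u) : linkC E u = linkC D u := by
  have hstar := isSimplicialComplex_starC hD a.support
  refine hD.linkC_eq_of_starC_subset ((srIdeal_le_srIdeal_iff (K := K) hE).1 ?_)
    ((srIdeal_le_srIdeal_iff (K := K) hstar).1 ?_) hu
  · rw [hEI, ← hI]
    exact Ideal.radical_mono Ideal.le_colon
  · rw [hEI, hstar.isRadical_srIdeal.radical_le_iff, ← hD.colon_srIdeal, ← hI]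
    exact Submodule.colon_mono Ideal.le_radical subset_rfl

end StanleyReisner

theorem kClean_srIdeal_starC_of_kDecomposable {K : Type*} [Field K] {n k : ℕ} {L : Finset (Finset (Fin n))}
    (hL : KDecomposable k L) {D : Finset (Finset (Fin n))} {s : Finset (Fin n)}
    (hD : IsSimplicialComplex D) (hs : s ∈ D) (hDL : linkC D s = L) :
    KClean K (Fin n) k (srIdeal K (starC D s)) := by
  induction hL generalizing D s with
  | empty => exact absurd (hDL ▸ hD.empty_mem_linkC hs) (notMem_empty _)
  | simplex G =>
    rw [hD.starC_eq_powerset hDL, srIdeal_powerset]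
    exact .prime _ (isPrime_varIdeal _)
  | shed L b hshed hcard _ _ ihlink ihdel =>
    subst hDL
    by_cases hb : b = ∅
    · subst hb
      exact ihlink hD hs (linkC_empty _).symm
    obtain ⟨-, hsb, hsbD⟩ := mem_linkC.1 hshed.1
    have hbs : b \ s = b := sdiff_eq_self_of_disjoint hsb.symm
    have hJ := isSimplicialComplex_starC hD s
    refine .step _ (squarefreeExp b) hJ.noEmbeddedPrimes_srIdeal ⟨?_, ?_, ?_⟩
      (by rwa [support_squarefreeExp]) ?_ ?_
    · rwa [Ne, ← Finsupp.support_eq_empty, support_squarefreeExp]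
    · rw [hJ.monomial_mem_srIdeal_iff, support_squarefreeExp, not_not, hD.mem_starC_iff]
      exact hsbD
    · rw [hJ.srIdeal_add_span_monomial,
        hJ.minimalPrimes_srIdeal_subset_iff (isSimplicialComplex_delC hJ b)]
      exact fun G hG => hD.isFacetOf_starC_of_isFacetOf_delC hshed hsb hG
    · rw [hJ.colon_srIdeal, support_squarefreeExp, hD.starC_starC]
      exact ihlink hD hsbD (by rw [← hD.linkC_linkC_sdiff, hbs])
    · rw [hJ.srIdeal_add_span_monomial, ← hbs, delC_starC_sdiff]
      have hbs' : ¬b ⊆ s := fun h => hb (disjoint_self_iff_empty _ |>.1 (hsb.symm.mono_right h))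
      exact ihdel (isSimplicialComplex_delC hD b) (mem_delC.2 ⟨hs, hbs'⟩)
        (by rw [← delC_linkC_sdiff, hbs])

theorem kDecomposable_linkC_of_kClean {K : Type*} [Field K] {n k : ℕ}
    {I : Ideal (MvPolynomial (Fin n) K)} (hI : KClean K (Fin n) k I) (hmono : IsMonomialIdeal I)
    {D : Finset (Finset (Fin n))} (hD : IsSimplicialComplex D) (hrad : I.radical = srIdeal K D)
    (s : Finset (Fin n)) : KDecomposable k (linkC D s) := by
  induction hI generalizing D s with
  | prime I hP =>
    obtain ⟨G, rfl⟩ :=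
      hD.exists_eq_powerset_of_isPrime_srIdeal (by rw [← hrad, hP.radical]; exact hP)
    rw [linkC_powerset]
    split_ifs
    · exact .simplex _
    · exact .empty
  | step I a _ hcl hsupp _ _ ihcolon ihsum =>
    obtain ⟨-, -, hmin⟩ := hcl
    have hdel : KDecomposable k (linkC (delC D a.support) s) :=
      ihsum (hmono.add_span_monomial a) (isSimplicialComplex_delC hD _)
        (hD.radical_add_span_monomial hrad a) s
    by_cases hst : s ∪ a.support ∈ D
    · obtain ⟨E, hE, hEI⟩ := (hmono.colon_span_monomial a).exists_srIdeal_eq_radical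
      have hlink : KDecomposable k (linkC D (s ∪ a.support)) := by
        rw [← hD.linkC_eq_of_srIdeal_eq_radical_colon hrad hE hEI subset_union_right]
        exact ihcolon (hmono.colon_span_monomial a) hE hEI.symm _
      have hfac : ∀ G, IsFacetOf (delC D a.support) G → IsFacetOf D G := by
        rw [← hD.minimalPrimes_srIdeal_subset_iff (K := K) (isSimplicialComplex_delC hD _),
          ← hrad, ← hD.radical_add_span_monomial hrad a, Ideal.radical_minimalPrimes,
          Ideal.radical_minimalPrimes]
        exact hmin
      exact .shed _ _ (hD.isSheddingFace_linkC_sdiff hst hfac)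
        ((card_le_card sdiff_subset).trans hsupp) (by rwa [hD.linkC_linkC_sdiff])
        (by rwa [delC_linkC_sdiff])
    · have hnot : a.support \ s ∉ linkC D s := fun h =>
        hst (by simpa [union_sdiff_self_eq_union] using (mem_linkC.1 h).2.2)
      rwa [← delC_linkC_sdiff, (isSimplicialComplex_linkC hD s).delC_eq_self hnot] at hdel

theorem kDecomposable_iff_kClean_general {K : Type*} [Field K] {n : ℕ}
    (D : Finset (Finset (Fin n))) (hD : IsSimplicialComplex D)
    (d : ℕ) (hdim' : ∃ F ∈ D, F.card = d)
    (k : ℕ) :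
    KDecomposable k D ↔ KClean K (Fin n) k (srIdeal K D) := by
  obtain ⟨F, hF, -⟩ := hdim'
  have hempty : ∅ ∈ D := hD F hF ∅ (empty_subset F)
  refine ⟨fun h => ?_, fun h => ?_⟩
  · simpa using kClean_srIdeal_starC_of_kDecomposable h hD hempty (linkC_empty D)
  · simpa using kDecomposable_linkC_of_kClean h (isMonomialIdeal_srIdeal D) hD
      hD.isRadical_srIdeal.radical ∅

/-- A `(d-1)`-dimensional simplicial complex `Δ` is `k`-decomposable
(`0 ≤ k ≤ d-1`) if and only if its Stanley–Reisner ideal `I_Δ` is `k`-clean. -/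
theorem kDecomposable_iff_kClean {K : Type*} [Field K] {n : ℕ}
    (D : Finset (Finset (Fin n))) (hD : IsSimplicialComplex D)
    (d : ℕ) (hdim : ∀ F ∈ D, F.card ≤ d) (hdim' : ∃ F ∈ D, F.card = d)
    (k : ℕ) (hk : k + 1 ≤ d) :
    KDecomposable k D ↔ KClean K (Fin n) k (srIdeal K D) :=
  kDecomposable_iff_kClean_general D hD d hdim' k
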